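/- Let T > 0, C > 0, k ≥ 0, m > k with m ≥ 2, K > 0. Let w : (0,T)×H → ℝ satisfy w(t,x) ≥ −C(1+‖x‖^k) for all (t,x) ∈ (0,T)×H, and suppose that for every R > 0 there exists a modulus σ_R such that |w(t,x) − w(s,y)| ≤ σ_R(|t−s| + ‖x−y‖_{-1}) for all t,s ∈ (0,T) and all x,y ∈ B_R. Then the inf-convolutions w_{λ,ε,β} converge to w uniformly on sets (0,T)×B_R in the following iterated sense: for every R > 0 and every ν > 0 there exists λ₀ > 0 such that for every λ ∈ (0,λ₀) there exists ε₀ > 0 such that for every ε ∈ (0,ε₀) there exists β₀ > 0 such that for every β ∈ (0,β₀), |w_{λ,ε,β}(t,x) − w(t,x)| ≤ ν for all t ∈ (0,T) and all x ∈ H with ‖x‖ ≤ R. -/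

import Mathlib

open scoped InnerProductSpace

/-!
The upper bound comes from the competitor `(s, y) = (t, x)`, whose only cost is
`λ e^{2mK(T-t)} ‖x‖^m ≤ λ e^{2mKT} R^m`; this fixes `λ₀`. For the lower bound, once `λ` is fixed
the growth condition `w ≥ -C(1 + ‖y‖^k)` with `k < m` makes every competitor with `‖y‖ ≥ M`
irrelevant, for a radius `M = M(λ)`. On the ball `B_M` the modulus `σ_M` controls
`w(t,x) - w(s,y)`: it is at most `ν` when `|t - s| + ‖x - y‖₋₁ ≤ δ`, and otherwise at most
`σ_M(T + 2 √‖B‖ M)`, which one of the two quadratic penalties exceeds once `ε` and `β` are small.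
-/

/-- The inf-convolution
`w_{λ,ε,β}(t,x) = inf_{(s,y)∈(0,T)×H} { w(s,y) + ‖x−y‖₋₁²/(2ε) + (t−s)²/(2β) + λ e^{2mK(T−s)}‖y‖^m }`,
where `‖z‖₋₁² = ⟨Bz,z⟩`. -/
noncomputable def infConv {H : Type*} [NormedAddCommGroup H] [InnerProductSpace ℝ H]
    (B : H →L[ℝ] H) (T m K lam ε β : ℝ) (w : ℝ → H → ℝ) (t : ℝ) (x : H) : ℝ :=
  sInf ((fun p : ℝ × H =>
      w p.1 p.2 + ⟪B (x - p.2), x - p.2⟫_ℝ / (2 * ε) + (t - p.1) ^ 2 / (2 * β)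
        + lam * Real.exp (2 * m * K * (T - p.1)) * ‖p.2‖ ^ m) ''
    (Set.Ioo 0 T ×ˢ (Set.univ : Set H)))

open Set Filter Topology Real

lemma MonotoneOn.exists_pos_forall_Icc_le {σ : ℝ → ℝ} (hmono : MonotoneOn σ (Ici 0))
    (hlim : Tendsto σ (𝓝[>] 0) (𝓝 0)) {ν : ℝ} (hν : 0 < ν) :
    ∃ δ > 0, ∀ r ∈ Icc 0 δ, σ r ≤ ν := by
  obtain ⟨δ, hδ, hσδ⟩ :=
    (eventually_mem_nhdsWithin.and (hlim.eventually (gt_mem_nhds hν))).exists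
  exact ⟨δ, hδ, fun r hr => (hmono hr.1 (mem_Ici.2 (le_of_lt (mem_Ioi.1 hδ))) hr.2).trans hσδ.le⟩

lemma lt_sq_div_of_half_lt {c δ ε a : ℝ} (hc : 0 < c) (hδ : 0 < δ) (hε : 0 < ε)
    (hεδ : ε < δ ^ 2 / (8 * c)) (ha : δ / 2 < a) : c < a ^ 2 / (2 * ε) := by
  rw [lt_div_iff₀ (by positivity)]
  rw [lt_div_iff₀ (by positivity)] at hεδ
  nlinarith

lemma MonotoneOn.le_add_sq_div_add_sq_div {σ : ℝ → ℝ} (hmono : MonotoneOn σ (Ici 0))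
    {ν δ D a b ε β : ℝ} (hν : 0 ≤ ν) (hδ : 0 < δ) (hσδ : ∀ r ∈ Icc 0 δ, σ r ≤ ν)
    (hσD : 0 ≤ σ D) (ha : 0 ≤ a) (hb : 0 ≤ b) (habD : a + b ≤ D)
    (hε : 0 < ε) (hεδ : ε < δ ^ 2 / (8 * (σ D + 1)))
    (hβ : 0 < β) (hβδ : β < δ ^ 2 / (8 * (σ D + 1))) :
    σ (a + b) ≤ ν + a ^ 2 / (2 * β) + b ^ 2 / (2 * ε) := by
  have hpen_a : 0 ≤ a ^ 2 / (2 * β) := by positivity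
  have hpen_b : 0 ≤ b ^ 2 / (2 * ε) := by positivity
  rcases le_or_gt (a + b) δ with hsmall | hlarge
  · linarith [hσδ (a + b) ⟨by positivity, hsmall⟩]
  have hσ : σ (a + b) ≤ σ D :=
    hmono (show (0 : ℝ) ≤ a + b by positivity) (show (0 : ℝ) ≤ D by linarith) habD
  rcases le_or_gt a (δ / 2) with ha' | ha'
  · linarith [lt_sq_div_of_half_lt (by linarith) hδ hε hεδ (by linarith : δ / 2 < b)]
  · linarith [lt_sq_div_of_half_lt (by linarith) hδ hβ hβδ ha']

lemma eventually_mul_one_add_rpow_add_le {k m lam : ℝ} (hkm : k < m) (hm : 0 < m)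
    (hlam : 0 < lam) (C W : ℝ) :
    ∀ᶠ r in atTop, C * (1 + r ^ k) + W ≤ lam * r ^ m := by
  have hlim : Tendsto (fun r : ℝ => C * r ^ (-(m - k)) + (C + W) * r ^ (-m)) atTop (𝓝 0) := by
    simpa using ((tendsto_rpow_neg_atTop (sub_pos.2 hkm)).const_mul C).add
      ((tendsto_rpow_neg_atTop hm).const_mul (C + W))
  filter_upwards [hlim.eventually (gt_mem_nhds hlam), eventually_gt_atTop 0] with r hr hr0
  have hrm : 0 < r ^ m := rpow_pos_of_pos hr0 m
  calc C * (1 + r ^ k) + W = (C * r ^ (-(m - k)) + (C + W) * r ^ (-m)) * r ^ m := by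
        rw [add_mul, mul_assoc, mul_assoc, ← rpow_add hr0, ← rpow_add hr0]
        simp only [neg_sub, sub_add_cancel, neg_add_cancel, rpow_zero]
        ring
    _ ≤ lam * r ^ m := mul_le_mul_of_nonneg_right hr.le hrm.le

lemma mul_exp_mul_rpow_le {m K T t lam ν R r : ℝ} (hm : 0 ≤ m) (hK : 0 ≤ K) (ht : 0 ≤ t)
    (hR : 0 < R) (hr : 0 ≤ r) (hrR : r ≤ R) (hlam : 0 ≤ lam)
    (hlamν : lam ≤ ν / (exp (2 * m * K * T) * R ^ m)) :
    lam * exp (2 * m * K * (T - t)) * r ^ m ≤ ν := by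
  have hexp : exp (2 * m * K * (T - t)) ≤ exp (2 * m * K * T) :=
    exp_le_exp.2 (mul_le_mul_of_nonneg_left (by linarith) (by positivity))
  have hRm : 0 < R ^ m := rpow_pos_of_pos hR m
  calc lam * exp (2 * m * K * (T - t)) * r ^ m ≤ lam * exp (2 * m * K * T) * R ^ m := by
        gcongr
    _ ≤ ν / (exp (2 * m * K * T) * R ^ m) * exp (2 * m * K * T) * R ^ m := by gcongr
    _ = ν := by field_simp

section InfConv

variable {H : Type*} [NormedAddCommGroup H] [InnerProductSpace ℝ H] (B : H →L[ℝ] H)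

lemma sqrt_inner_map_self_le (z : H) : √⟪B z, z⟫_ℝ ≤ √‖B‖ * ‖z‖ := by
  have h : ⟪B z, z⟫_ℝ ≤ ‖B‖ * ‖z‖ ^ 2 := by
    calc ⟪B z, z⟫_ℝ ≤ ‖B z‖ * ‖z‖ := real_inner_le_norm _ _
      _ ≤ ‖B‖ * ‖z‖ * ‖z‖ := by gcongr; exact B.le_opNorm z
      _ = ‖B‖ * ‖z‖ ^ 2 := by ring
  calc √⟪B z, z⟫_ℝ ≤ √(‖B‖ * ‖z‖ ^ 2) := sqrt_le_sqrt h
    _ = √‖B‖ * ‖z‖ := by rw [sqrt_mul (norm_nonneg _), sqrt_sq (norm_nonneg _)]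

def HasModulusOnBall (T R : ℝ) (w : ℝ → H → ℝ) (σ : ℝ → ℝ) : Prop :=
  ∀ t ∈ Ioo (0 : ℝ) T, ∀ s ∈ Ioo (0 : ℝ) T, ∀ x y : H, ‖x‖ < R → ‖y‖ < R →
    |w t x - w s y| ≤ σ (|t - s| + √⟪B (x - y), x - y⟫_ℝ)

noncomputable def infConvCost (T m K lam ε β : ℝ) (w : ℝ → H → ℝ) (t : ℝ) (x : H) (s : ℝ)
    (y : H) : ℝ :=
  w s y + ⟪B (x - y), x - y⟫_ℝ / (2 * ε) + (t - s) ^ 2 / (2 * β)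
    + lam * exp (2 * m * K * (T - s)) * ‖y‖ ^ m

variable {B}

lemma HasModulusOnBall.exists_forall_le {T R : ℝ} {w : ℝ → H → ℝ} {σ : ℝ → ℝ}
    (hw : HasModulusOnBall B T R w σ) (hmono : MonotoneOn σ (Ici 0)) (hT : 0 < T)
    (hR : 0 < R) : ∃ W, ∀ t ∈ Ioo (0 : ℝ) T, ∀ x : H, ‖x‖ < R → w t x ≤ W := by
  refine ⟨w (T / 2) 0 + σ (T + √‖B‖ * R), fun t ht x hx => ?_⟩
  have hdist : |t - T / 2| + √⟪B (x - 0), x - 0⟫_ℝ ≤ T + √‖B‖ * R := by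
    have ht' : |t - T / 2| ≤ T := abs_le.2 ⟨by linarith [ht.1], by linarith [ht.2]⟩
    have hx' : √⟪B (x - 0), x - 0⟫_ℝ ≤ √‖B‖ * R := by
      rw [sub_zero]
      exact (sqrt_inner_map_self_le B x).trans (by gcongr)
    linarith
  have hσ := hmono (add_nonneg (abs_nonneg _) (sqrt_nonneg _))
    (show (0 : ℝ) ≤ T + √‖B‖ * R by positivity) hdist
  have hwx := (abs_le.1 (hw t ht (T / 2) ⟨by linarith, by linarith⟩ x 0 hx (by simpa))).2
  linarith

lemma HasModulusOnBall.sub_le_add_sq_div_add_sq_div {T M : ℝ} {w : ℝ → H → ℝ}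
    {σ : ℝ → ℝ} (hBpos : ∀ z : H, 0 ≤ ⟪B z, z⟫_ℝ) (hw : HasModulusOnBall B T M w σ)
    (hmono : MonotoneOn σ (Ici 0)) (hσ : ∀ r, 0 ≤ r → 0 ≤ σ r)
    {ν δ ε β : ℝ} (hν : 0 ≤ ν) (hδ : 0 < δ) (hσδ : ∀ r ∈ Icc 0 δ, σ r ≤ ν)
    (hε : 0 < ε) (hεδ : ε < δ ^ 2 / (8 * (σ (T + √‖B‖ * (2 * M)) + 1)))
    (hβ : 0 < β) (hβδ : β < δ ^ 2 / (8 * (σ (T + √‖B‖ * (2 * M)) + 1)))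
    {t s : ℝ} (ht : t ∈ Ioo 0 T) (hs : s ∈ Ioo 0 T) {x y : H} (hx : ‖x‖ < M) (hy : ‖y‖ < M) :
    w t x - ν ≤ w s y + ⟪B (x - y), x - y⟫_ℝ / (2 * ε) + (t - s) ^ 2 / (2 * β) := by
  have hts : |t - s| ≤ T := abs_le.2 ⟨by linarith [ht.1, hs.2], by linarith [ht.2, hs.1]⟩
  have hxy : √⟪B (x - y), x - y⟫_ℝ ≤ √‖B‖ * (2 * M) :=
    (sqrt_inner_map_self_le B _).trans (by gcongr; linarith [norm_sub_le x y])
  have hT : 0 < T := ht.1.trans ht.2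
  have hM : 0 < M := (norm_nonneg x).trans_lt hx
  have hσ_le := hmono.le_add_sq_div_add_sq_div hν hδ hσδ (hσ _ (by positivity))
    (abs_nonneg (t - s)) (sqrt_nonneg ⟪B (x - y), x - y⟫_ℝ) (by linarith) hε hεδ hβ hβδ
  rw [sq_abs, sq_sqrt (hBpos _)] at hσ_le
  linarith [(abs_le.1 (hw t ht s hs x y hx hy)).2]

variable {T m K lam ε β : ℝ} {w : ℝ → H → ℝ} {t : ℝ} {x : H}

lemma infConv_eq_sInf : infConv B T m K lam ε β w t x =
    sInf ((fun p : ℝ × H => infConvCost B T m K lam ε β w t x p.1 p.2) '' (Ioo 0 T ×ˢ univ)) :=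
  rfl

@[simp]
lemma infConvCost_self : infConvCost B T m K lam ε β w t x t x =
    w t x + lam * exp (2 * m * K * (T - t)) * ‖x‖ ^ m := by
  simp [infConvCost]

lemma le_infConv {a : ℝ} (ht : t ∈ Ioo 0 T)
    (h : ∀ s ∈ Ioo 0 T, ∀ y, a ≤ infConvCost B T m K lam ε β w t x s y) :
    a ≤ infConv B T m K lam ε β w t x := by
  rw [infConv_eq_sInf]
  refine le_csInf ⟨_, mem_image_of_mem _ (mk_mem_prod ht (mem_univ x))⟩ ?_
  rintro _ ⟨⟨s, y⟩, ⟨hs, -⟩, rfl⟩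
  exact h s hs y

lemma infConv_le {a : ℝ} (ht : t ∈ Ioo 0 T)
    (h : ∀ s ∈ Ioo 0 T, ∀ y, a ≤ infConvCost B T m K lam ε β w t x s y) :
    infConv B T m K lam ε β w t x ≤ w t x + lam * exp (2 * m * K * (T - t)) * ‖x‖ ^ m := by
  rw [infConv_eq_sInf, ← infConvCost_self]
  refine csInf_le ⟨a, ?_⟩ (mem_image_of_mem _ (mk_mem_prod ht (mem_univ x)))
  rintro _ ⟨⟨s, y⟩, ⟨hs, -⟩, rfl⟩
  exact h s hs y

lemma add_rpow_le_infConvCost (hBpos : ∀ z : H, 0 ≤ ⟪B z, z⟫_ℝ) (hm : 0 ≤ m) (hK : 0 ≤ K)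
    (hlam : 0 ≤ lam) (hε : 0 ≤ ε) (hβ : 0 ≤ β) {s : ℝ} (hs : s ≤ T) (y : H) :
    w s y + lam * ‖y‖ ^ m ≤ infConvCost B T m K lam ε β w t x s y := by
  have hexp : 1 ≤ exp (2 * m * K * (T - s)) :=
    one_le_exp (mul_nonneg (by positivity) (sub_nonneg.2 hs))
  have hpen : lam * ‖y‖ ^ m ≤ lam * exp (2 * m * K * (T - s)) * ‖y‖ ^ m := by
    rw [mul_right_comm]
    exact le_mul_of_one_le_right (by positivity) hexp
  unfold infConvCost
  linarith [div_nonneg (hBpos (x - y)) (by positivity : (0 : ℝ) ≤ 2 * ε),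
    div_nonneg (sq_nonneg (t - s)) (by positivity : (0 : ℝ) ≤ 2 * β)]

end InfConv

theorem infConv_converges_to_w_general
    {H : Type*} [NormedAddCommGroup H] [InnerProductSpace ℝ H]
    (B : H →L[ℝ] H) (hBpos : ∀ x : H, 0 ≤ ⟪B x, x⟫_ℝ)
    (T C k m K : ℝ)
    (hT : 0 < T) (hkm : k < m) (hm : 2 ≤ m) (hK : 0 < K)
    (w : ℝ → H → ℝ)
    (hgrowth : ∀ t ∈ Set.Ioo (0 : ℝ) T, ∀ x : H, -C * (1 + ‖x‖ ^ k) ≤ w t x)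
    (hmod : ∀ R > (0 : ℝ), ∃ σ : ℝ → ℝ,
      (∀ r : ℝ, 0 ≤ r → 0 ≤ σ r) ∧ MonotoneOn σ (Set.Ici (0 : ℝ)) ∧ σ 0 = 0 ∧
      Filter.Tendsto σ (nhdsWithin 0 (Set.Ioi 0)) (nhds 0) ∧
      ∀ t ∈ Set.Ioo (0 : ℝ) T, ∀ s ∈ Set.Ioo (0 : ℝ) T, ∀ x y : H, ‖x‖ < R → ‖y‖ < R →
        |w t x - w s y| ≤ σ (|t - s| + Real.sqrt ⟪B (x - y), x - y⟫_ℝ)) :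
    ∀ R > (0 : ℝ), ∀ ν > (0 : ℝ), ∃ lam₀ > (0 : ℝ), ∀ lam : ℝ, 0 < lam → lam < lam₀ →
      ∃ ε₀ > (0 : ℝ), ∀ ε : ℝ, 0 < ε → ε < ε₀ →
        ∃ β₀ > (0 : ℝ), ∀ β : ℝ, 0 < β → β < β₀ →
          ∀ t ∈ Set.Ioo (0 : ℝ) T, ∀ x : H, ‖x‖ ≤ R →
            |infConv B T m K lam ε β w t x - w t x| ≤ ν := by
  intro R hR ν hν
  obtain ⟨σ₁, -, hmono₁, -, -, hw₁⟩ := hmod (R + 1) (by linarith)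
  obtain ⟨W, hW⟩ := HasModulusOnBall.exists_forall_le hw₁ hmono₁ hT (by linarith)
  have hRm : 0 < R ^ m := rpow_pos_of_pos hR m
  refine ⟨ν / (exp (2 * m * K * T) * R ^ m), by positivity, fun lam hlam hlam₀ => ?_⟩
  obtain ⟨M, hRM, hM⟩ := ((eventually_gt_atTop R).and (eventually_forall_ge_atTop.2
    (eventually_mul_one_add_rpow_add_le hkm (by linarith) hlam C W))).exists
  have hM0 : 0 < M := hR.trans hRM
  obtain ⟨σ, hσ, hmono, -, hlim, hw : HasModulusOnBall B T M w σ⟩ := hmod M hM0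
  obtain ⟨δ, hδ, hσδ⟩ := hmono.exists_pos_forall_Icc_le hlim hν
  have hσD := hσ (T + √‖B‖ * (2 * M)) (by positivity)
  have hε₀ : 0 < δ ^ 2 / (8 * (σ (T + √‖B‖ * (2 * M)) + 1)) := by positivity
  refine ⟨_, hε₀, fun ε hε hεδ => ⟨_, hε₀, fun β hβ hβδ t ht x hx => ?_⟩⟩
  have hlow : ∀ s ∈ Ioo 0 T, ∀ y, w t x - ν ≤ infConvCost B T m K lam ε β w t x s y := by
    intro s hs y
    rcases lt_or_ge ‖y‖ M with hy | hy
    · exact (hw.sub_le_add_sq_div_add_sq_div hBpos hmono hσ hν.le hδ hσδ hε hεδ hβ hβδ ht hs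
        (by linarith) hy).trans (le_add_of_nonneg_right (by positivity))
    · have : w s y + lam * ‖y‖ ^ m ≤ infConvCost B T m K lam ε β w t x s y :=
        add_rpow_le_infConvCost hBpos (by linarith) hK.le hlam.le hε.le hβ.le hs.2.le y
      linarith [hW t ht x (by linarith), hgrowth s hs y, hM _ hy]
  have hpen := mul_exp_mul_rpow_le (t := t) (by linarith) hK.le ht.1.le hR (norm_nonneg x) hx
    hlam.le hlam₀.le
  rw [abs_le]
  exact ⟨by linarith [le_infConv ht hlow], by linarith [infConv_le ht hlow]⟩

/-- If `w(t,x) ≥ −C(1+‖x‖^k)` with `k < m` and `w` is uniformly continuous in the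
`|·| + ‖·‖₋₁` distance on bounded sets (with modulus `σ_R`, where `‖z‖₋₁ = √⟨Bz,z⟩`), then
the inf-convolutions `w_{λ,ε,β}` converge to `w` uniformly on `(0,T) × B_R` in the iterated
sense: for every `R, ν > 0` there is `λ₀ > 0` such that for every `λ ∈ (0,λ₀)` there is
`ε₀ > 0` such that for every `ε ∈ (0,ε₀)` there is `β₀ > 0` such that for every
`β ∈ (0,β₀)`, `|w_{λ,ε,β}(t,x) − w(t,x)| ≤ ν` whenever `t ∈ (0,T)` and `‖x‖ ≤ R`. -/
theorem infConv_converges_to_w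
    {H : Type*} [NormedAddCommGroup H] [InnerProductSpace ℝ H] [CompleteSpace H]
    [TopologicalSpace.SeparableSpace H]
    (B : H →L[ℝ] H) (hBsa : IsSelfAdjoint B) (hBpos : ∀ x : H, 0 ≤ ⟪B x, x⟫_ℝ)
    (T C k m K : ℝ)
    (hT : 0 < T) (hC : 0 < C) (hk : 0 ≤ k) (hkm : k < m) (hm : 2 ≤ m) (hK : 0 < K)
    (w : ℝ → H → ℝ)
    (hgrowth : ∀ t ∈ Set.Ioo (0 : ℝ) T, ∀ x : H, -C * (1 + ‖x‖ ^ k) ≤ w t x)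
    (hmod : ∀ R > (0 : ℝ), ∃ σ : ℝ → ℝ,
      (∀ r : ℝ, 0 ≤ r → 0 ≤ σ r) ∧ MonotoneOn σ (Set.Ici (0 : ℝ)) ∧ σ 0 = 0 ∧
      Filter.Tendsto σ (nhdsWithin 0 (Set.Ioi 0)) (nhds 0) ∧
      ∀ t ∈ Set.Ioo (0 : ℝ) T, ∀ s ∈ Set.Ioo (0 : ℝ) T, ∀ x y : H, ‖x‖ < R → ‖y‖ < R →
        |w t x - w s y| ≤ σ (|t - s| + Real.sqrt ⟪B (x - y), x - y⟫_ℝ)) :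
    ∀ R > (0 : ℝ), ∀ ν > (0 : ℝ), ∃ lam₀ > (0 : ℝ), ∀ lam : ℝ, 0 < lam → lam < lam₀ →
      ∃ ε₀ > (0 : ℝ), ∀ ε : ℝ, 0 < ε → ε < ε₀ →
        ∃ β₀ > (0 : ℝ), ∀ β : ℝ, 0 < β → β < β₀ →
          ∀ t ∈ Set.Ioo (0 : ℝ) T, ∀ x : H, ‖x‖ ≤ R →
            |infConv B T m K lam ε β w t x - w t x| ≤ ν :=
  infConv_converges_to_w_general B hBpos T C k m K hT hkm hm hK w hgrowth hmod
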